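/- The discrete wedge product is graded anti-commutative: let X be an abstract simplicial complex, α ∈ C^k(X) and β ∈ C^l(X). Then for every (k+l)-simplex σ of X, (α ∧ β)(σ) = (−1)^{kl} (β ∧ α)(σ), i.e. α ∧ β = (−1)^{kl} β ∧ α in C^{k+l}(X). -/

import Mathlib

open Finset
open scoped Classical

/-- An abstract simplicial complex on a vertex type `V`: a downward-closed
family of nonempty finite sets of vertices. -/
structure ASC (V : Type*) where
  faces : Set (Finset V)
  nonempty_of_mem : ∀ s ∈ faces, s.Nonempty
  down_closed : ∀ s ∈ faces, ∀ t ⊆ s, t.Nonempty → t ∈ faces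

variable {V W : Type*} [DecidableEq V] [DecidableEq W]

/-- `v` is an ordered `k`-simplex of `X`: an injective tuple of vertices spanning a face. -/
def IsSimplex (X : ASC V) (k : ℕ) (v : Fin (k + 1) → V) : Prop :=
  Function.Injective v ∧ Finset.image v Finset.univ ∈ X.faces

/-- A (raw) `k`-cochain is alternating: permuting the vertices changes the value by
the sign of the permutation. -/
def IsAlternating (k : ℕ) (α : (Fin (k + 1) → V) → ℝ) : Prop :=
  ∀ (v : Fin (k + 1) → V) (τ : Equiv.Perm (Fin (k + 1))),
    α (v ∘ τ) = ((Equiv.Perm.sign τ : ℤ) : ℝ) * α v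

/-- The coboundary (discrete exterior derivative) of a `k`-cochain. -/
noncomputable def coboundary (k : ℕ) (α : (Fin (k + 1) → V) → ℝ) :
    (Fin (k + 2) → V) → ℝ :=
  fun v => ∑ i : Fin (k + 2), (-1 : ℝ) ^ (i : ℕ) * α (v ∘ i.succAbove)

/-- An abstract simplicial map: a vertex map carrying faces of `X` to faces of `Y`. -/
def IsSimplicialMap (X : ASC V) (Y : ASC W) (f : V → W) : Prop :=
  ∀ s ∈ X.faces, s.image f ∈ Y.faces

/-- Pullback of a `k`-cochain along a vertex map: `(f*α)(c) = α(f♯ c)`, where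
`f♯` sends a tuple with distinct images to its image tuple and to `0` otherwise. -/
noncomputable def pullback (f : V → W) (k : ℕ) (α : (Fin (k + 1) → W) → ℝ) :
    (Fin (k + 1) → V) → ℝ :=
  fun v => if Function.Injective (f ∘ v) then α (f ∘ v) else 0

/-- The cup product of a `k`-cochain and an `l`-cochain. -/
noncomputable def cup (k l : ℕ) (α : (Fin (k + 1) → V) → ℝ) (β : (Fin (l + 1) → V) → ℝ) :
    (Fin (k + l + 1) → V) → ℝ :=
  fun v => α (fun i => v ⟨(i : ℕ), by have := i.isLt; omega⟩) *
    β (fun i => v ⟨k + (i : ℕ), by have := i.isLt; omega⟩)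

/-- The discrete (DEC) wedge product: the antisymmetrized cup product. -/
noncomputable def wedge (k l : ℕ) (α : (Fin (k + 1) → V) → ℝ) (β : (Fin (l + 1) → V) → ℝ) :
    (Fin (k + l + 1) → V) → ℝ :=
  fun v => (1 / (Nat.factorial (k + l + 1) : ℝ)) *
    ∑ τ : Equiv.Perm (Fin (k + l + 1)),
      ((Equiv.Perm.sign τ : ℤ) : ℝ) * cup k l α β (v ∘ τ)

/-!
Precomposing an ordered `(k + l)`-simplex with the order-reversing permutation of its
vertices swaps the roles of the front `k`-face and the back `l`-face, so for alternating `α`,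
`β` it turns `α ⌣ β` into `β ⌣ α` times the signs of the reversals of `k + 1` and of `l + 1`
points. Antisymmetrization absorbs the reversal of all `k + l + 1` points at the cost of its
sign. The reversal of `n` points has sign `(-1) ^ (n choose 2)`, and
`C(k+l+1, 2) = C(k+1, 2) + C(l+1, 2) + k l`.
-/

open Equiv

theorem Fin.revPerm_succ (n : ℕ) :
    (Fin.revPerm : Perm (Fin (n + 1))) =
      (finRotate (n + 1))⁻¹ * Perm.decomposeFin.symm (0, Fin.revPerm) := by
  rw [eq_inv_mul_iff_mul_eq]
  ext i
  refine Fin.cases ?_ (fun x => ?_) i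
  · simp
  · simp only [Perm.mul_apply, Fin.revPerm_apply, Perm.decomposeFin_symm_apply_succ,
      swap_self, refl_apply, finRotate_apply, Fin.ext_iff, Fin.val_add_one, Fin.val_rev,
      Fin.val_succ, Fin.val_last]
    split_ifs <;> omega

theorem Fin.sign_revPerm (n : ℕ) :
    Perm.sign (Fin.revPerm : Perm (Fin n)) = (-1) ^ n.choose 2 := by
  induction n with
  | zero => rfl
  | succ n ih =>
    rw [Fin.revPerm_succ, map_mul, map_inv, sign_finRotate, Perm.decomposeFin.symm_sign,
      ih, Nat.choose_succ_succ, Nat.choose_one_right, pow_add]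
    simp

theorem Nat.add_add_one_choose_two (k l : ℕ) :
    (k + l + 1).choose 2 = (k + 1).choose 2 + (l + 1).choose 2 + k * l := by
  induction l with
  | zero => simp
  | succ l ih =>
    rw [← Nat.add_assoc, Nat.choose_succ_succ, ih, Nat.choose_succ_succ (l + 1),
      Nat.choose_one_right, Nat.choose_one_right]
    ring

theorem Fin.sign_revPerm_mul_sign_revPerm_mul_sign_revPerm (k l : ℕ) :
    Perm.sign (Fin.revPerm : Perm (Fin (k + l + 1))) *
      (Perm.sign (Fin.revPerm : Perm (Fin (k + 1))) *
        Perm.sign (Fin.revPerm : Perm (Fin (l + 1)))) = (-1) ^ (k * l) := by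
  rw [Fin.sign_revPerm, Fin.sign_revPerm, Fin.sign_revPerm, Nat.add_add_one_choose_two,
    pow_add, pow_add]
  generalize ((-1 : ℤˣ) ^ (k + 1).choose 2) = a
  generalize ((-1 : ℤˣ) ^ (l + 1).choose 2) = b
  calc a * b * (-1) ^ (k * l) * (a * b) = (a * a) * (b * b) * (-1) ^ (k * l) := by ac_rfl
    _ = (-1) ^ (k * l) := by simp [Int.units_mul_self]

theorem cup_comp_revPerm {V : Type*} {k l : ℕ} {α : (Fin (k + 1) → V) → ℝ}
    {β : (Fin (l + 1) → V) → ℝ} (hα : IsAlternating k α) (hβ : IsAlternating l β)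
    (w : Fin (k + l + 1) → V) :
    cup k l α β (w ∘ Fin.revPerm) =
      (((Perm.sign (Fin.revPerm : Perm (Fin (k + 1))) *
        Perm.sign (Fin.revPerm : Perm (Fin (l + 1))) : ℤˣ) : ℤ) : ℝ) *
          cup l k β α (w ∘ Fin.cast (congrArg (· + 1) (Nat.add_comm l k))) := by
  simp only [cup, Units.val_mul, Int.cast_mul]
  rw [mul_comm (β _), mul_mul_mul_comm, ← hα, ← hβ]
  congr 2 <;> funext i <;> simp only [Function.comp_apply, Fin.revPerm_apply] <;>
    congr 1 <;> simp only [Fin.ext_iff, Fin.val_rev, Fin.val_cast] <;> omega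

def antisymmetrize {V : Type*} (n : ℕ) (f : (Fin n → V) → ℝ) (v : Fin n → V) : ℝ :=
  ∑ τ : Perm (Fin n), ((Perm.sign τ : ℤ) : ℝ) * f (v ∘ τ)

theorem wedge_eq_antisymmetrize {V : Type*} (k l : ℕ) (α : (Fin (k + 1) → V) → ℝ)
    (β : (Fin (l + 1) → V) → ℝ) (v : Fin (k + l + 1) → V) :
    wedge k l α β v =
      1 / ((k + l + 1).factorial : ℝ) * antisymmetrize (k + l + 1) (cup k l α β) v :=
  rfl

theorem antisymmetrize_const_mul {V : Type*} {n : ℕ} (c : ℝ) (f : (Fin n → V) → ℝ)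
    (v : Fin n → V) :
    antisymmetrize n (fun w => c * f w) v = c * antisymmetrize n f v := by
  simp only [antisymmetrize, Finset.mul_sum, mul_left_comm]

theorem antisymmetrize_comp_perm {V : Type*} {n : ℕ} (f : (Fin n → V) → ℝ)
    (π : Perm (Fin n)) (v : Fin n → V) :
    antisymmetrize n (fun w => f (w ∘ π)) v = Perm.sign π * antisymmetrize n f v := by
  have hπ : ((Perm.sign π : ℤ) : ℝ) * (Perm.sign π : ℤ) = 1 := by
    exact_mod_cast Int.units_coe_mul_self _
  rw [antisymmetrize, antisymmetrize, Finset.mul_sum]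
  refine Fintype.sum_equiv (Equiv.mulRight π) _ _ fun τ => ?_
  simp only [coe_mulRight, Perm.coe_mul, map_mul, Units.val_mul, Int.cast_mul,
    Function.comp_assoc]
  linear_combination (-(Perm.sign τ : ℤ) * f (v ∘ τ ∘ π) : ℝ) * hπ

theorem antisymmetrize_comp_cast {V : Type*} {m n : ℕ} (h : m = n) (f : (Fin m → V) → ℝ)
    (v : Fin n → V) :
    antisymmetrize m f (v ∘ Fin.cast h) = antisymmetrize n (fun w => f (w ∘ Fin.cast h)) v := by
  subst h
  rfl

theorem wedge_antisymm {V : Type*} (k l : ℕ)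
    (α : (Fin (k + 1) → V) → ℝ) (hα : IsAlternating k α)
    (β : (Fin (l + 1) → V) → ℝ) (hβ : IsAlternating l β)
    (σ : Fin (k + l + 1) → V) :
    wedge k l α β σ =
      (-1 : ℝ) ^ (k * l) *
        wedge l k β α (σ ∘ Fin.cast (by omega : l + k + 1 = k + l + 1)) := by
  set ε := Perm.sign (Fin.revPerm : Perm (Fin (k + 1))) *
    Perm.sign (Fin.revPerm : Perm (Fin (l + 1)))
  have hcup : (fun w => cup l k β α (w ∘ Fin.cast (by omega))) =
      fun w => ((ε : ℤ) : ℝ) * cup k l α β (w ∘ Fin.revPerm) := by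
    funext w
    rw [cup_comp_revPerm hα hβ, ← mul_assoc, ← Int.cast_mul, Int.units_coe_mul_self,
      Int.cast_one, one_mul]
  have hsign : ((ε : ℤ) : ℝ) * (Perm.sign (Fin.revPerm : Perm (Fin (k + l + 1))) : ℤ) =
      (-1) ^ (k * l) := by
    rw [mul_comm, ← Int.cast_mul, ← Units.val_mul,
      Fin.sign_revPerm_mul_sign_revPerm_mul_sign_revPerm]
    push_cast
    rfl
  rw [wedge_eq_antisymmetrize, wedge_eq_antisymmetrize, antisymmetrize_comp_cast, hcup,
    antisymmetrize_const_mul, antisymmetrize_comp_perm, ← mul_assoc (ε : ℝ), hsign,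
    Nat.add_comm l k, mul_left_comm, ← mul_assoc ((-1 : ℝ) ^ (k * l)), ← mul_pow, neg_one_mul,
    neg_neg, one_pow, one_mul]
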